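/- Let A ⊆ ℝ^m and B ⊆ ℝ^m be nonempty closed convex sets with A ⊆ B, let δ ∈ (0,1) with d_tH(hom A, hom B) ≤ δ, and let y ∈ bd A. Then there exists a nonzero z ∈ bd(hom B) such that d(z/‖z‖, cone{(y,1)}) ≤ δ. -/

import Mathlib

open Metric Set

noncomputable section

/-- `ℝ^m` as a Euclidean space. -/
abbrev Em (m : ℕ) := EuclideanSpace ℝ (Fin m)

/-- `ℝ^(m+1)` realized as the L²-product `ℝ^m × ℝ`. -/
abbrev Em1 (m : ℕ) := WithLp 2 (Em m × ℝ)

/-- The conic hull: all finite nonnegative combinations of elements of `M`. -/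
def coneHull {V : Type*} [AddCommMonoid V] [Module ℝ V] (M : Set V) : Set V :=
  {x | ∃ (k : ℕ) (c : Fin k → ℝ) (v : Fin k → V),
    (∀ i, 0 ≤ c i) ∧ (∀ i, v i ∈ M) ∧ x = ∑ i, c i • v i}

/-- The ray `cone {v} = {λ • v : λ ≥ 0}`. -/
def ray {V : Type*} [AddCommMonoid V] [Module ℝ V] (v : V) : Set V :=
  {x | ∃ l : ℝ, 0 ≤ l ∧ x = l • v}

/-- The vector `(y, 1) ∈ ℝ^(m+1)` obtained by appending a last coordinate `1` to `y`. -/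
def lift1 {m : ℕ} (y : Em m) : Em1 m := (WithLp.equiv 2 (Em m × ℝ)).symm (y, 1)

/-- The homogenization `hom Z = cl (cone (Z × {1}))` of a set `Z ⊆ ℝ^m`. -/
def homog {m : ℕ} (Z : Set (Em m)) : Set (Em1 m) := closure (coneHull (lift1 '' Z))

/-- The truncated Hausdorff distance `d_tH(K₁, K₂) = d_H(K₁ ∩ 𝔹, K₂ ∩ 𝔹)`. -/
def dtH {V : Type*} [NormedAddCommGroup V] (K₁ K₂ : Set V) : ℝ :=
  hausdorffDist (K₁ ∩ closedBall 0 1) (K₂ ∩ closedBall 0 1)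

/-! The point `(y, 1)` lies on the boundary of the closed convex cone `hom A`, so it has a unit
normal `w ⊥ (y, 1)` with `⟪w, ·⟫ ≤ 0` on `hom A`. Every unit vector of `hom B` is within `δ` of
`hom A ∩ 𝔹`, hence `⟪w, x⟫ ≤ δ ‖x‖` on `hom B`. Walking from `(y, 1)` along `w`, the last point
`z = (y, 1) + t w` of `hom B` lies on its boundary, and `t = ⟪w, z⟫ ≤ δ ‖z‖` says that
`z / ‖z‖` is within `δ` of the point `(y, 1) / ‖z‖` of the ray. -/

open scoped InnerProductSpace

lemma coneHull_eq_hull {V : Type*} [AddCommMonoid V] [Module ℝ V] (M : Set V) :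
    coneHull M = PointedCone.hull ℝ M := by
  ext x
  rw [SetLike.mem_coe, Submodule.mem_span_set']
  constructor
  · rintro ⟨k, c, v, hc, hv, rfl⟩
    exact ⟨k, fun i => ⟨c i, hc i⟩, fun i => ⟨v i, hv i⟩, rfl⟩
  · rintro ⟨k, c, v, rfl⟩
    exact ⟨k, fun i => c i, fun i => v i, fun i => (c i).2, fun i => (v i).2, rfl⟩

section Homogenization

variable {m : ℕ}

def homogCone (Z : Set (Em m)) : ProperCone ℝ (Em1 m) :=
  Submodule.closure (PointedCone.hull ℝ (lift1 '' Z))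

lemma coe_homogCone (Z : Set (Em m)) : (homogCone Z : Set (Em1 m)) = homog Z := by
  rw [homog, coneHull_eq_hull]; rfl

lemma homog_mono {Z W : Set (Em m)} (h : Z ⊆ W) : homog Z ⊆ homog W :=
  closure_mono <| by
    simpa only [coneHull_eq_hull] using
      SetLike.coe_subset_coe.2 (Submodule.span_mono (image_mono h))

@[simp] lemma fst_lift1 (y : Em m) : (lift1 y).fst = y := rfl

@[simp] lemma snd_lift1 (y : Em m) : (lift1 y).snd = 1 := rfl

lemma lift1_ne_zero (y : Em m) : lift1 y ≠ 0 := fun h => one_ne_zero (congrArg WithLp.snd h)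

lemma continuous_lift1 : Continuous (lift1 (m := m)) :=
  (WithLp.prodContinuousLinearEquiv 2 ℝ (Em m) ℝ).symm.continuous.comp
    (continuous_id.prodMk continuous_const)

lemma inv_snd_smul_fst_mem_of_mem_coneHull {A : Set (Em m)} (hA : Convex ℝ A) {q : Em1 m}
    (hq : q ∈ coneHull (lift1 '' A)) (hq2 : 0 < q.snd) : q.snd⁻¹ • q.fst ∈ A := by
  obtain ⟨k, c, v, hc, hv, rfl⟩ := hq
  choose a ha hav using hv
  have hsnd : (∑ i, c i • v i).snd = ∑ i, c i :=
    (map_sum (WithLp.sndL 2 ℝ (Em m) ℝ) _ _).trans (by simp [← hav])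
  have hfst : (∑ i, c i • v i).fst = ∑ i, c i • a i :=
    (map_sum (WithLp.fstL 2 ℝ (Em m) ℝ) _ _).trans (by simp [← hav])
  rw [hsnd] at hq2 ⊢
  rw [hfst, Finset.smul_sum]
  simp_rw [smul_smul]
  exact hA.sum_mem (fun i _ => mul_nonneg (inv_nonneg.2 hq2.le) (hc i))
    (by rw [← Finset.mul_sum, inv_mul_cancel₀ hq2.ne']) (fun i _ => ha i)

lemma preimage_lift1_homog {A : Set (Em m)} (hAcl : IsClosed A) (hAconv : Convex ℝ A) :
    lift1 ⁻¹' homog A = A := by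
  refine Subset.antisymm (fun y hy => ?_) fun y hy =>
    subset_closure <| by rw [coneHull_eq_hull]; exact PointedCone.subset_hull ⟨y, hy, rfl⟩
  have hopen : IsOpen {x : Em1 m | 0 < x.snd} :=
    isOpen_lt continuous_const (WithLp.sndL 2 ℝ (Em m) ℝ).continuous
  have hcont : ContinuousAt (fun x : Em1 m => x.snd⁻¹ • x.fst) (lift1 y) :=
    ((WithLp.sndL 2 ℝ (Em m) ℝ).continuous.continuousAt.inv₀ (by simp)).smul
      (WithLp.fstL 2 ℝ (Em m) ℝ).continuous.continuousAt
  have hmem := hcont.continuousWithinAt.mem_closure_image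
    (hopen.inter_closure ⟨by simp, hy⟩)
  rw [snd_lift1, fst_lift1, inv_one, one_smul] at hmem
  refine hAcl.closure_subset_iff.2 ?_ hmem
  rintro _ ⟨x, ⟨hx2, hx⟩, rfl⟩
  exact inv_snd_smul_fst_mem_of_mem_coneHull hAconv hx hx2

lemma lift1_mem_frontier_homog {A : Set (Em m)} (hAcl : IsClosed A) (hAconv : Convex ℝ A)
    {y : Em m} (hy : y ∈ frontier A) : lift1 y ∈ frontier (homog A) := by
  have := continuous_lift1.frontier_preimage_subset (homog A)
  rw [preimage_lift1_homog hAcl hAconv] at this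
  exact this hy

end Homogenization

section Supporting

variable {E : Type*} [NormedAddCommGroup E] [InnerProductSpace ℝ E] [FiniteDimensional ℝ E]

theorem Convex.exists_ne_zero_inner_le_of_notMem_interior {K : Set E} (hK : Convex ℝ K) {u : E}
    (huK : u ∈ K) (hu : u ∉ interior K) : ∃ w ≠ 0, ∀ x ∈ K, ⟪w, x⟫_ℝ ≤ ⟪w, u⟫_ℝ := by
  by_cases hint : (interior K).Nonempty
  · obtain ⟨f, hf, hfK⟩ := geometric_hahn_banach_of_nonempty_interior_point hK hu hint
    refine ⟨(InnerProductSpace.toDual ℝ E).symm f, by simpa using hf, fun x hx => ?_⟩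
    simpa using hfK x hx
  · -- `K` lies in a proper affine subspace; a normal vector to it is constant on `K`.
    rw [hK.interior_nonempty_iff_affineSpan_eq_top,
      ← AffineSubspace.direction_eq_top_iff_of_nonempty ⟨u, mem_affineSpan ℝ huK⟩,
      ← Submodule.orthogonal_eq_bot_iff, ← ne_eq, Submodule.ne_bot_iff] at hint
    obtain ⟨w, hw, hw0⟩ := hint
    refine ⟨w, hw0, fun x hx => le_of_eq ?_⟩
    have := (Submodule.mem_orthogonal' _ _).1 hw _
      (AffineSubspace.vsub_mem_direction (mem_affineSpan ℝ hx) (mem_affineSpan ℝ huK))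
    rw [vsub_eq_sub, inner_sub_right] at this
    linarith

theorem ProperCone.exists_norm_eq_one_inner_eq_zero_of_mem_frontier (K : ProperCone ℝ E) {v : E}
    (hv : v ∈ frontier (K : Set E)) :
    ∃ w : E, ‖w‖ = 1 ∧ ⟪w, v⟫_ℝ = 0 ∧ ∀ x ∈ K, ⟪w, x⟫_ℝ ≤ 0 := by
  have hvK : v ∈ K := K.isClosed.frontier_subset hv
  obtain ⟨w, hw0, hw⟩ := K.convex.exists_ne_zero_inner_le_of_notMem_interior hvK hv.2
  have hwv : ⟪w, v⟫_ℝ = 0 := by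
    have h0 := hw 0 K.zero_mem
    have h2 := hw _ (K.smul_mem hvK zero_le_two)
    rw [inner_zero_right] at h0
    rw [real_inner_smul_right] at h2
    linarith
  refine ⟨‖w‖⁻¹ • w, norm_smul_inv_norm hw0, by rw [real_inner_smul_left, hwv, mul_zero],
    fun x hx => ?_⟩
  rw [real_inner_smul_left]
  exact mul_nonpos_of_nonneg_of_nonpos (by positivity) (hwv ▸ hw x hx)

end Supporting

lemma infDist_inter_closedBall_le_dtH {V : Type*} [NormedAddCommGroup V] {K₁ K₂ : Set V}
    (h₁ : (0 : V) ∈ K₁) {x : V} (hx : x ∈ K₂) (hx1 : ‖x‖ ≤ 1) :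
    infDist x (K₁ ∩ closedBall 0 1) ≤ dtH K₁ K₂ := by
  have hx' : x ∈ K₂ ∩ closedBall 0 1 := ⟨hx, mem_closedBall_zero_iff.2 hx1⟩
  rw [dtH, hausdorffDist_comm]
  exact infDist_le_hausdorffDist_of_mem hx' <| hausdorffEDist_ne_top_of_nonempty_of_bounded
    ⟨x, hx'⟩ ⟨0, h₁, mem_closedBall_self zero_le_one⟩
    (isBounded_closedBall.subset inter_subset_right)
    (isBounded_closedBall.subset inter_subset_right)

lemma exists_nonneg_mem_frontier_of_bddAbove {X : Type*} [TopologicalSpace X] {K : Set X}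
    (hK : IsClosed K) {f : ℝ → X} (hf : Continuous f) (h0 : f 0 ∈ K)
    (hbdd : BddAbove {t | 0 ≤ t ∧ f t ∈ K}) : ∃ t, 0 ≤ t ∧ f t ∈ frontier K := by
  have hclosed : IsClosed {t | 0 ≤ t ∧ f t ∈ K} := isClosed_Ici.inter (hK.preimage hf)
  obtain ⟨ht0, htK⟩ := hclosed.csSup_mem ⟨0, le_rfl, h0⟩ hbdd
  refine ⟨_, ht0, ?_⟩
  rw [frontier_eq_closure_inter_closure]
  refine ⟨subset_closure htK, ?_⟩
  have hout : ∀ s > sSup {t | 0 ≤ t ∧ f t ∈ K}, f s ∈ Kᶜ := fun s hs hsK =>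
    (le_csSup hbdd ⟨ht0.trans hs.le, hsK⟩).not_gt hs
  exact mem_closure_of_tendsto ((hf.tendsto _).mono_left nhdsWithin_le_nhds)
    (eventually_nhdsWithin_of_forall fun s (hs : s ∈ Ioi _) => hout s hs)

section Inner

variable {E : Type*} [NormedAddCommGroup E] [InnerProductSpace ℝ E]

lemma inner_le_infDist {S : Set E} (hS : S.Nonempty) {w : E} (hw : ‖w‖ = 1)
    (hwS : ∀ a ∈ S, ⟪w, a⟫_ℝ ≤ 0) (x : E) : ⟪w, x⟫_ℝ ≤ infDist x S := by
  refine (le_infDist hS).2 fun a ha => ?_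
  calc ⟪w, x⟫_ℝ ≤ ⟪w, x - a⟫_ℝ := by rw [inner_sub_right]; linarith [hwS a ha]
    _ ≤ ‖w‖ * ‖x - a‖ := real_inner_le_norm _ _
    _ = dist x a := by rw [hw, one_mul, dist_eq_norm]

lemma ProperCone.inner_le_mul_norm_of_dtH_le (K₁ K₂ : ProperCone ℝ E) {δ : ℝ}
    (hd : dtH (K₁ : Set E) K₂ ≤ δ) {w : E} (hw : ‖w‖ = 1) (hwK : ∀ a ∈ K₁, ⟪w, a⟫_ℝ ≤ 0)
    {x : E} (hx : x ∈ K₂) : ⟪w, x⟫_ℝ ≤ δ * ‖x‖ := by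
  rcases eq_or_ne x 0 with rfl | hx0
  · simp
  have hxn : 0 < ‖x‖ := norm_pos_iff.2 hx0
  have hunit := calc
    ⟪w, ‖x‖⁻¹ • x⟫_ℝ ≤ infDist (‖x‖⁻¹ • x) (K₁ ∩ closedBall 0 1) :=
      inner_le_infDist (S := (K₁ : Set E) ∩ closedBall 0 1)
        ⟨0, K₁.zero_mem, mem_closedBall_self zero_le_one⟩ hw (fun a ha => hwK a ha.1) _
    _ ≤ dtH (K₁ : Set E) K₂ := infDist_inter_closedBall_le_dtH K₁.zero_mem
        (K₂.smul_mem hx (inv_nonneg.2 hxn.le)) (norm_smul_inv_norm hx0).le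
    _ ≤ δ := hd
  rwa [real_inner_smul_right, inv_mul_le_iff₀ hxn, mul_comm] at hunit

variable [FiniteDimensional ℝ E]

theorem ProperCone.exists_mem_frontier_infDist_ray_le (K₁ K₂ : ProperCone ℝ E) (h : K₁ ≤ K₂)
    {δ : ℝ} (hδ : δ < 1) (hd : dtH (K₁ : Set E) K₂ ≤ δ) {v : E}
    (hv : v ∈ frontier (K₁ : Set E)) (hv0 : v ≠ 0) :
    ∃ z ∈ frontier (K₂ : Set E), z ≠ 0 ∧ infDist (‖z‖⁻¹ • z) (ray v) ≤ δ := by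
  obtain ⟨w, hw, hwv, hwK⟩ := K₁.exists_norm_eq_one_inner_eq_zero_of_mem_frontier hv
  have hδ0 : 0 ≤ δ := hausdorffDist_nonneg.trans hd
  have hinner (t : ℝ) : ⟪w, v + t • w⟫_ℝ = t := by
    rw [inner_add_right, hwv, real_inner_smul_right, real_inner_self_eq_norm_sq, hw]; ring
  have hbound {t : ℝ} (ht : v + t • w ∈ K₂) : t ≤ δ * ‖v + t • w‖ :=
    (hinner t).ge.trans (K₁.inner_le_mul_norm_of_dtH_le K₂ hd hw hwK ht)
  have hbdd : BddAbove {t : ℝ | 0 ≤ t ∧ v + t • w ∈ K₂} := by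
    refine ⟨δ * ‖v‖ / (1 - δ), fun t ⟨ht0, htK⟩ => ?_⟩
    have := (hbound htK).trans (mul_le_mul_of_nonneg_left (norm_add_le _ _) hδ0)
    rw [norm_smul, hw, mul_one, Real.norm_of_nonneg ht0] at this
    rw [le_div_iff₀ (by linarith)]
    linarith
  obtain ⟨t, ht0, hfr⟩ := exists_nonneg_mem_frontier_of_bddAbove K₂.isClosed (by fun_prop)
    (by simpa using h (K₁.isClosed.frontier_subset hv)) hbdd
  set z := v + t • w with hz
  have hz0 : z ≠ 0 := by
    intro h0
    have ht : t = 0 := by rw [← hinner t, ← hz, h0, inner_zero_right]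
    rw [hz, ht, zero_smul, add_zero] at h0
    exact hv0 h0
  refine ⟨z, hfr, hz0, ?_⟩
  calc infDist (‖z‖⁻¹ • z) (ray v) ≤ dist (‖z‖⁻¹ • z) (‖z‖⁻¹ • v) :=
        infDist_le_dist_of_mem ⟨_, inv_nonneg.2 (norm_nonneg z), rfl⟩
    _ = ‖z‖⁻¹ * t := by
        rw [dist_smul₀, dist_eq_norm, hz, add_sub_cancel_left, norm_smul, hw, mul_one,
          Real.norm_of_nonneg ht0, norm_inv, norm_norm]
    _ ≤ δ := by
        rw [inv_mul_le_iff₀ (norm_pos_iff.2 hz0), mul_comm]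
        exact hbound (K₂.isClosed.frontier_subset hfr)

end Inner

theorem exists_nonzero_boundary_point_of_homogenization_close_to_ray_general
    {m : ℕ} (A B : Set (Em m))
    (hAcl : IsClosed A)
    (hAconv : Convex ℝ A) (hAB : A ⊆ B)
    (δ : ℝ) (hδ : δ ∈ Set.Ioo (0:ℝ) 1) (hd : dtH (homog A) (homog B) ≤ δ)
    (y : Em m) (hy : y ∈ frontier A) :
    ∃ z ∈ frontier (homog B), z ≠ 0 ∧
      infDist (‖z‖⁻¹ • z) (ray (lift1 y)) ≤ δ := by
  simp only [← coe_homogCone] at hd ⊢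
  refine (homogCone A).exists_mem_frontier_infDist_ray_le (homogCone B) ?_ hδ.2 hd ?_
    (lift1_ne_zero y)
  · simpa only [← SetLike.coe_subset_coe, coe_homogCone] using homog_mono hAB
  · simpa only [coe_homogCone] using lift1_mem_frontier_homog hAcl hAconv hy

/-- If `A ⊆ B` are nonempty closed convex sets with `d_tH(hom A, hom B) ≤ δ` for some
`δ ∈ (0,1)` and `y ∈ bd A`, then there is a nonzero `z ∈ bd(hom B)` with
`d(z/‖z‖, cone{(y,1)}) ≤ δ`. -/
theorem exists_nonzero_boundary_point_of_homogenization_close_to_ray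
    {m : ℕ} (A B : Set (Em m)) (hAne : A.Nonempty) (hBne : B.Nonempty)
    (hAcl : IsClosed A) (hBcl : IsClosed B)
    (hAconv : Convex ℝ A) (hBconv : Convex ℝ B) (hAB : A ⊆ B)
    (δ : ℝ) (hδ : δ ∈ Set.Ioo (0:ℝ) 1) (hd : dtH (homog A) (homog B) ≤ δ)
    (y : Em m) (hy : y ∈ frontier A) :
    ∃ z ∈ frontier (homog B), z ≠ 0 ∧
      infDist (‖z‖⁻¹ • z) (ray (lift1 y)) ≤ δ :=
  exists_nonzero_boundary_point_of_homogenization_close_to_ray_general A B hAcl hAconv hAB δ hδ hd y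
    hy
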